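/- arXiv:2105.07220 — 6 statements merged into one kernel-verified Lean document; each statement's English description precedes it below -/
import Mathlib

section
/- (Correctness of the paper's eqLen encoding.) For all binary words α and β: |α| = |β| if and only if there exists k ≥ 0 such that, writing z for the binary word consisting of the digit 1 followed by k zeros (i.e., z ∈ L(1·0^*)), the following inequalities hold: val(z) ≤ val(1·α), val(1·α) + 1 ≤ val(z·0), val(z) ≤ val(1·β), and val(1·β) + 1 ≤ val(z·0). -/
/-!
Prepending a `1` to a word `γ` gives `val (1·γ) = 2^|γ| + val γ` with `val γ < 2^|γ|`, so
`⌊log₂ val (1·γ)⌋ = |γ|`. Since `val z = 2^k` and `val (z·0) = 2^(k+1)`, the two inequalities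
for `1·γ` say exactly `2^k ≤ val (1·γ) < 2^(k+1)`, i.e. `k = |γ|`.
-/

/-- Value of a binary word (big-endian, `true` = 1, `false` = 0):
`val w = Σ_{j=1}^{|w|} w[j] · 2^{|w|-j}`. -/
def binVal : List Bool → ℕ :=
  fun w => w.foldl (fun n b => 2 * n + (if b then 1 else 0)) 0

lemma foldl_binVal (w : List Bool) (n : ℕ) :
    w.foldl (fun n b => 2 * n + (if b then 1 else 0)) n = n * 2 ^ w.length + binVal w := by
  induction w generalizing n with
  | nil => simp [binVal]
  | cons b t ih =>
    have hbt : binVal (b :: t) = (2 * 0 + (if b then 1 else 0)) * 2 ^ t.length + binVal t := ih _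
    rw [List.foldl_cons, ih, hbt, List.length_cons]
    ring

lemma binVal_append (u v : List Bool) : binVal (u ++ v) = binVal u * 2 ^ v.length + binVal v := by
  rw [binVal, List.foldl_append, foldl_binVal]
  rfl

lemma binVal_cons (b : Bool) (w : List Bool) :
    binVal (b :: w) = (if b then 1 else 0) * 2 ^ w.length + binVal w := by
  rw [← List.singleton_append, binVal_append]
  cases b <;> rfl

lemma binVal_lt_two_pow (w : List Bool) : binVal w < 2 ^ w.length := by
  induction w with
  | nil => simp [binVal]
  | cons b t ih =>
    rw [binVal_cons, List.length_cons, pow_succ]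
    cases b <;> simp <;> omega

lemma binVal_replicate_false (k : ℕ) : binVal (List.replicate k false) = 0 := by
  induction k with
  | zero => rfl
  | succ k ih => simp [List.replicate_succ, binVal_cons, ih]

lemma binVal_true_cons_replicate_false (k : ℕ) :
    binVal (true :: List.replicate k false) = 2 ^ k := by
  simp [binVal_cons, binVal_replicate_false]

lemma binVal_append_false (w : List Bool) : binVal (w ++ [false]) = 2 * binVal w := by
  rw [binVal_append]
  simp [binVal, mul_comm]

lemma log_two_binVal_true_cons (w : List Bool) : Nat.log 2 (binVal (true :: w)) = w.length := by
  have hlt := binVal_lt_two_pow w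
  rw [binVal_cons]
  apply Nat.log_eq_of_pow_le_of_lt_pow <;> simp [pow_succ]; omega

lemma binVal_true_cons_between_iff (γ : List Bool) (k : ℕ) :
    (binVal (true :: List.replicate k false) ≤ binVal (true :: γ) ∧
      binVal (true :: γ) + 1 ≤ binVal ((true :: List.replicate k false) ++ [false])) ↔
      k = γ.length := by
  rw [binVal_append_false, binVal_true_cons_replicate_false, ← log_two_binVal_true_cons γ,
    eq_comm, Nat.log_eq_iff (by simp [binVal_cons]), pow_succ, mul_comm, Nat.succ_le_iff]

theorem stmt_3 (α β : List Bool) :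
    α.length = β.length ↔
      ∃ k : ℕ,
        binVal (true :: List.replicate k false) ≤ binVal (true :: α) ∧
        binVal (true :: α) + 1 ≤ binVal ((true :: List.replicate k false) ++ [false]) ∧
        binVal (true :: List.replicate k false) ≤ binVal (true :: β) ∧
        binVal (true :: β) + 1 ≤ binVal ((true :: List.replicate k false) ++ [false]) := by
  constructor
  · intro h
    obtain ⟨hα₁, hα₂⟩ := (binVal_true_cons_between_iff α α.length).2 rfl
    obtain ⟨hβ₁, hβ₂⟩ := (binVal_true_cons_between_iff β α.length).2 h
    exact ⟨α.length, hα₁, hα₂, hβ₁, hβ₂⟩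
  · rintro ⟨k, hα₁, hα₂, hβ₁, hβ₂⟩
    rw [← (binVal_true_cons_between_iff α k).1 ⟨hα₁, hα₂⟩,
      (binVal_true_cons_between_iff β k).1 ⟨hβ₁, hβ₂⟩]
end

section
/- (Correctness of the paper's string-equality encoding via string–number conversion.) For all binary words α and β: α = β if and only if |α| = |β| and val(1·α·1·β) = val(1·β·1·α). -/
theorem binVal_append_singleton (w : List Bool) (b : Bool) :
    binVal (w ++ [b]) = 2 * binVal w + b.toNat := by
  cases b <;> simp [binVal]

-- `Nat.ofDigits` reads its digit list little-endian, hence the `reverse`.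
theorem binVal_eq_ofDigits (w : List Bool) :
    binVal w = Nat.ofDigits 2 (w.reverse.map Bool.toNat) := by
  induction w using List.reverseRecOn with
  | nil => rfl
  | append_singleton w b ih =>
    simp [binVal_append_singleton, Nat.ofDigits_cons, ih, add_comm]

theorem binVal_injective_of_length_eq {u v : List Bool} (hl : u.length = v.length)
    (h : binVal u = binVal v) : u = v := by
  rw [binVal_eq_ofDigits, binVal_eq_ofDigits] at h
  have hdigit (w : List Bool) : ∀ d ∈ w.reverse.map Bool.toNat, d < 2 := by
    simp only [List.mem_map]
    rintro _ ⟨b, -, rfl⟩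
    exact Bool.toNat_lt b
  have hdigits := Nat.ofDigits_inj_of_len_eq one_lt_two (by simpa using hl) (hdigit u) (hdigit v) h
  have htoNat : Function.Injective Bool.toNat := by decide
  exact List.reverse_injective ((List.map_injective_iff.2 htoNat) hdigits)

theorem stmt_4 (α β : List Bool) :
    α = β ↔
      α.length = β.length ∧
      binVal ([true] ++ α ++ [true] ++ β) = binVal ([true] ++ β ++ [true] ++ α) := by
  refine ⟨fun h => h ▸ ⟨rfl, rfl⟩, fun ⟨hl, hv⟩ => ?_⟩
  have hword := binVal_injective_of_length_eq (by simp; omega) hv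
  simpa using List.append_inj_left hword (by simp [hl])
end

section
/- (Semilinearity of length sets, with period bound.) Let M be an NFA over an alphabet Σ whose state type is finite of cardinality m. Then there exists a finite set F of pairs (p, c) of natural numbers, with c ≤ m for every (p, c) ∈ F, such that the length set {|w| : w ∈ L(M)} equals the union over (p, c) ∈ F of the arithmetic progressions {p + r·c : r ∈ ℕ}. -/
/-!
An accepting run on a word of length `n ≥ m` visits `m + 1` states within its first `m` steps,
so it revisits a state after some `c ∈ [1, m]` steps. Pumping that loop shows that `n` lies in a
progression `p + ℕ c` of accepted lengths. For each period `c` and residue `ρ` modulo `c` it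
suffices to keep the progression with the least offset, which leaves finitely many progressions;
the lengths below `m` are covered by singletons.
-/

open Computability

namespace NFA

variable {α σ : Type*} (M : NFA α σ)

theorem exists_run_of_mem_evalFrom {S : Set σ} {x : List α} {t : σ} (ht : t ∈ M.evalFrom S x) :
    ∃ f : ℕ → σ, f 0 ∈ S ∧ f x.length = t ∧
      ∀ i (hi : i < x.length), f (i + 1) ∈ M.step (f i) x[i] := by
  induction x generalizing S with
  | nil => exact ⟨fun _ => t, ht, rfl, fun i hi => absurd hi (Nat.not_lt_zero i)⟩
  | cons a x ih =>
    obtain ⟨f, hf0, hft, hf⟩ := ih ht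
    obtain ⟨s, hs, hsf⟩ := M.mem_stepSet.1 hf0
    refine ⟨fun | 0 => s | i + 1 => f i, hs, hft, ?_⟩
    rintro (_ | i) hi
    · exact hsf
    · exact hf i (by simpa using hi)

theorem mem_evalFrom_drop_take {x : List α} {f : ℕ → σ}
    (hf : ∀ i (hi : i < x.length), f (i + 1) ∈ M.step (f i) x[i]) {i j : ℕ} (hij : i ≤ j)
    (hj : j ≤ x.length) : f j ∈ M.evalFrom {f i} ((x.take j).drop i) := by
  induction j, hij using Nat.le_induction with
  | base => simp
  | succ j hij ih =>
    rw [List.take_add_one, List.getElem?_eq_getElem (by omega), Option.toList_some,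
      List.drop_append_of_le_length (by simp; omega), evalFrom_append, evalFrom_singleton]
    exact M.mem_stepSet.2 ⟨f j, ih (by omega), hf j _⟩

theorem mem_evalFrom_append {S : Set σ} {s t : σ} {x y : List α} (hs : s ∈ M.evalFrom S x)
    (ht : t ∈ M.evalFrom {s} y) : t ∈ M.evalFrom S (x ++ y) := by
  rw [evalFrom_append, mem_evalFrom_iff_exists]
  exact ⟨s, hs, ht⟩

theorem evalFrom_split [Fintype σ] {S : Set σ} {x : List α} {t : σ}
    (hlen : Fintype.card σ ≤ x.length) (ht : t ∈ M.evalFrom S x) :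
    ∃ q a b c, x = a ++ b ++ c ∧ a.length + b.length ≤ Fintype.card σ ∧ b ≠ [] ∧
      q ∈ M.evalFrom S a ∧ q ∈ M.evalFrom {q} b ∧ t ∈ M.evalFrom {q} c := by
  obtain ⟨f, hf0, rfl, hf⟩ := M.exists_run_of_mem_evalFrom ht
  obtain ⟨i, j, hne, heq⟩ := Fintype.exists_ne_map_eq_of_card_lt
    (fun n : Fin (Fintype.card σ + 1) => f n) (by simp)
  wlog hij : i < j generalizing i j
  · exact this j i hne.symm heq.symm (lt_of_le_of_ne (not_lt.1 hij) hne.symm)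
  have hjc : (j : ℕ) ≤ Fintype.card σ := Nat.le_of_lt_succ j.isLt
  have hij : (i : ℕ) < j := hij
  have hj : (j : ℕ) ≤ x.length := hjc.trans hlen
  refine ⟨f i, x.take i, (x.take j).drop i, x.drop j, ?_, ?_, ?_, ?_, ?_, ?_⟩
  · conv_lhs => rw [← List.take_append_drop j x, ← List.take_append_drop i (x.take j)]
    rw [List.take_take, min_eq_left hij.le]
  · simp only [List.length_take, List.length_drop]
    omega
  · exact List.ne_nil_of_length_pos (by simp only [List.length_drop, List.length_take]; omega)
  · exact M.mem_evalFrom_iff_exists.2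
      ⟨f 0, hf0, by simpa using M.mem_evalFrom_drop_take hf (Nat.zero_le i) (by omega)⟩
  · have hb := M.mem_evalFrom_drop_take hf hij.le hj
    rwa [← heq] at hb
  · rw [heq]
    simpa using M.mem_evalFrom_drop_take hf hj le_rfl

theorem mem_evalFrom_of_mem_kstar {q : σ} {x y : List α} (hx : q ∈ M.evalFrom {q} x)
    (hy : y ∈ ({x} : Language α)∗) : q ∈ M.evalFrom {q} y := by
  obtain ⟨L, rfl, hL⟩ := Language.mem_kstar.1 hy
  clear hy
  induction L with
  | nil => simp
  | cons z L ih =>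
    rw [List.flatten_cons, (hL z List.mem_cons_self : z = x)]
    exact M.mem_evalFrom_append hx (ih fun y hy => hL y (List.mem_cons_of_mem z hy))

theorem pumping_lemma_card [Fintype σ] {x : List α} (hx : x ∈ M.accepts)
    (hlen : Fintype.card σ ≤ x.length) :
    ∃ a b c, x = a ++ b ++ c ∧ a.length + b.length ≤ Fintype.card σ ∧ b ≠ [] ∧
      {a} * {b}∗ * {c} ≤ M.accepts := by
  obtain ⟨t, ht, hx⟩ := M.mem_accepts.1 hx
  obtain ⟨q, a, b, c, rfl, hlen, hb, ha, hq, hc⟩ := M.evalFrom_split hlen hx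
  refine ⟨a, b, c, rfl, hlen, hb, ?_⟩
  rintro _ ⟨_, ⟨_, rfl, y, hy, rfl⟩, _, rfl, rfl⟩
  exact M.mem_accepts.2
    ⟨t, ht, M.mem_evalFrom_append (M.mem_evalFrom_append ha (M.mem_evalFrom_of_mem_kstar hq hy)) hc⟩

end NFA

def arithProgression (p c : ℕ) : Set ℕ := {n | ∃ r, n = p + r * c}

theorem arithProgression_subset_of_mem {p q c : ℕ} (hp : p ∈ arithProgression q c) :
    arithProgression p c ⊆ arithProgression q c := by
  obtain ⟨k, rfl⟩ := hp
  rintro _ ⟨r, rfl⟩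
  exact ⟨k + r, by ring⟩

/-- `sInf ∅ = 0`, so this is meaningful only when some progression `p + ℕ c ⊆ S` has
`p % c = ρ`. -/
noncomputable def leastOffset (S : Set ℕ) (c ρ : ℕ) : ℕ :=
  sInf {p | p % c = ρ ∧ arithProgression p c ⊆ S}

theorem leastOffset_spec {S : Set ℕ} {p c : ℕ} (hp : arithProgression p c ⊆ S) :
    arithProgression (leastOffset S c (p % c)) c ⊆ S ∧
      p ∈ arithProgression (leastOffset S c (p % c)) c := by
  have hmem : p ∈ {q | q % c = p % c ∧ arithProgression q c ⊆ S} := ⟨rfl, hp⟩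
  have hle : leastOffset S c (p % c) ≤ p := Nat.sInf_le hmem
  obtain ⟨hmod, hsub⟩ := Nat.sInf_mem ⟨p, hmem⟩
  obtain ⟨k, hk⟩ := (Nat.modEq_iff_dvd' hle).1 hmod
  exact ⟨hsub, k, by rw [mul_comm, ← hk]; omega⟩

theorem exists_finset_eq_biUnion_arithProgression {S : Set ℕ} {m : ℕ}
    (h : ∀ n ∈ S, m ≤ n → ∃ p c, 0 < c ∧ c ≤ m ∧ n ∈ arithProgression p c ∧
      arithProgression p c ⊆ S) :
    ∃ F : Finset (ℕ × ℕ), (∀ pc ∈ F, pc.2 ≤ m) ∧ S = ⋃ pc ∈ F, arithProgression pc.1 pc.2 := by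
  classical
  -- A pair `(0, n)` yields the singleton `{n}`; these cover the elements below `m`.
  let I := (Finset.range (m + 1) ×ˢ Finset.range m).filter
    fun cρ => arithProgression (leastOffset S cρ.1 cρ.2) cρ.1 ⊆ S
  refine ⟨I.image fun cρ => (leastOffset S cρ.1 cρ.2, cρ.1), ?_, ?_⟩
  · simp only [Finset.mem_image, Finset.mem_filter, Finset.mem_product, Finset.mem_range, I]
    rintro _ ⟨cρ, ⟨⟨hc, -⟩, -⟩, rfl⟩
    exact Nat.le_of_lt_succ hc
  refine subset_antisymm (fun n hn => ?_) ?_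
  · obtain ⟨p, c, hcm, hρ, hn, hpS⟩ : ∃ p c, c ≤ m ∧ p % c < m ∧ n ∈ arithProgression p c ∧
        arithProgression p c ⊆ S := by
      rcases lt_or_ge n m with hnm | hmn
      · refine ⟨n, 0, Nat.zero_le m, by rwa [Nat.mod_zero], ⟨0, rfl⟩, ?_⟩
        rintro _ ⟨r, rfl⟩
        simpa using hn
      · obtain ⟨p, c, hc, hcm, hn, hpS⟩ := h n hn hmn
        exact ⟨p, c, hcm, (Nat.mod_lt p hc).trans_le hcm, hn, hpS⟩
    obtain ⟨hqS, hpq⟩ := leastOffset_spec hpS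
    refine Set.mem_biUnion (Finset.mem_image_of_mem _ (a := (c, p % c)) ?_)
      (arithProgression_subset_of_mem hpq hn)
    simpa [I] using ⟨⟨hcm, hρ⟩, hqS⟩
  · simp only [Set.iUnion_subset_iff, Finset.mem_image]
    rintro _ ⟨cρ, hcρ, rfl⟩
    exact (Finset.mem_filter.1 hcρ).2

theorem stmt_8 {A σ : Type*} [Fintype σ] (M : NFA A σ) (m : ℕ)
    (hm : Fintype.card σ = m) :
    ∃ F : Finset (ℕ × ℕ),
      (∀ pc ∈ F, pc.2 ≤ m) ∧
      {n : ℕ | ∃ w ∈ M.accepts, w.length = n} =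
        ⋃ pc ∈ F, {n : ℕ | ∃ r : ℕ, n = pc.1 + r * pc.2} := by
  subst hm
  refine exists_finset_eq_biUnion_arithProgression fun n ⟨x, hx, hn⟩ hlen => ?_
  subst hn
  obtain ⟨a, b, c, rfl, hab, hb, hpump⟩ := M.pumping_lemma_card hx hlen
  refine ⟨a.length + c.length, b.length, List.length_pos_of_ne_nil hb, by omega, ⟨1, ?_⟩, ?_⟩
  · simp only [List.length_append]
    ring
  · rintro _ ⟨r, rfl⟩
    refine ⟨a ++ (List.replicate r b).flatten ++ c, hpump ?_, ?_⟩
    · exact ⟨_, ⟨a, rfl, _, Language.join_mem_kstar fun y hy => List.eq_of_mem_replicate hy, rfl⟩,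
        c, rfl, rfl⟩
    · simp only [List.length_append, List.length_flatten, List.map_replicate, List.sum_replicate,
        smul_eq_mul]
      ring
end

section
/- (Eventual periodicity of length sets of regular languages.) Let M be an NFA over an alphabet Σ whose state type is finite. Then there exist natural numbers t and p with p ≥ 1 such that for all n ≥ t: M accepts some word of length n if and only if M accepts some word of length n + p. -/
/-!
A word of length `n + 1` is a letter followed by a word of length `n`, so the set of states
reachable from the start states by words of length `n` is the `n`-th iterate of a single map on
`Set σ`, namely "take one step on any letter". Since `Set σ` is finite, the iterates of that map
are eventually periodic, and whether some word of length `n` is accepted depends only on that set.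
-/

open Set

namespace Function

theorem exists_iterate_add_eq_of_finite {α : Type*} [Finite α] (f : α → α) (x : α) :
    ∃ t p : ℕ, 0 < p ∧ ∀ n, t ≤ n → f^[n + p] x = f^[n] x := by
  obtain ⟨t, s, hts, heq⟩ :=
    Set.finite_univ.exists_lt_map_eq_of_forall_mem (f := fun n ↦ f^[n] x) fun _ ↦ mem_univ _
  have hper : IsPeriodicPt f (s - t) (f^[t] x) := by
    rw [IsPeriodicPt, IsFixedPt, ← iterate_add_apply, Nat.sub_add_cancel hts.le]
    exact heq.symm
  refine ⟨t, s - t, Nat.sub_pos_of_lt hts, fun n hn ↦ ?_⟩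
  obtain ⟨k, rfl⟩ := Nat.exists_eq_add_of_le' hn
  simpa only [← iterate_add_apply, Nat.add_comm] using (hper.apply_iterate k).eq

end Function

namespace NFA

variable {α σ : Type*} (M : NFA α σ)

def stepAny (S : Set σ) : Set σ := ⋃ a, M.stepSet S a

theorem mem_stepAny_iterate {S : Set σ} {n : ℕ} {s : σ} :
    s ∈ M.stepAny^[n] S ↔ ∃ w : List α, w.length = n ∧ s ∈ M.evalFrom S w := by
  induction n generalizing S with
  | zero => simp
  | succ n ih =>
    simp only [Function.iterate_succ_apply, ih, stepAny, evalFrom_iUnion, mem_iUnion,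
      ← evalFrom_cons]
    constructor
    · rintro ⟨w, hw, a, hs⟩
      exact ⟨a :: w, by rw [List.length_cons, hw], hs⟩
    · rintro ⟨_ | ⟨a, w⟩, hw, hs⟩
      · cases hw
      · exact ⟨w, Nat.succ_injective hw, a, hs⟩

theorem exists_mem_accepts_length_eq_iff {n : ℕ} :
    (∃ w ∈ M.accepts, w.length = n) ↔ (M.stepAny^[n] M.start ∩ M.accept).Nonempty := by
  simp only [mem_accepts, Set.Nonempty, mem_inter_iff, mem_stepAny_iterate]
  constructor
  · rintro ⟨w, ⟨s, hs, hw⟩, rfl⟩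
    exact ⟨s, ⟨w, rfl, hw⟩, hs⟩
  · rintro ⟨s, ⟨w, rfl, hw⟩, hs⟩
    exact ⟨w, ⟨s, hs, hw⟩, rfl⟩

end NFA

theorem stmt_9 {A σ : Type*} [Fintype σ] (M : NFA A σ) :
    ∃ t p : ℕ, 1 ≤ p ∧
      ∀ n : ℕ, t ≤ n →
        ((∃ w ∈ M.accepts, w.length = n) ↔ (∃ w ∈ M.accepts, w.length = n + p)) := by
  obtain ⟨t, p, hp, hper⟩ := Function.exists_iterate_add_eq_of_finite M.stepAny M.start
  refine ⟨t, p, hp, fun n hn ↦ ?_⟩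
  rw [M.exists_mem_accepts_length_eq_iff, M.exists_mem_accepts_length_eq_iff, hper n hn]
end

section
/- (Small-model property for conjunctions of positive and negated regular membership constraints on one string variable.) Let M₁, …, M_k be NFAs over a common alphabet Σ with state types of cardinalities m₁, …, m_k, and let N₁, …, N_l be NFAs over Σ with state types of cardinalities n₁, …, n_l. If there exists a word w ∈ Σ^* such that w ∈ L(M_i) for all i and w ∉ L(N_j) for all j, then there exists such a word of length strictly less than (∏_{i=1}^{k} m_i) · (∏_{j=1}^{l} 2^{n_j}). -/
/-!
A word satisfies all the constraints iff it is accepted by a single NFA: the product of the `M i`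
with the subset-construction complements of the `N j`, which has
`(∏ i, m_i) * ∏ j, 2 ^ n_j` states. An NFA with `c` states that accepts some word accepts one of
length `< c`: the states reachable by words of length `< n` are the `n`-th iterate from `∅` of a
monotone operator on `Set σ`, and such iterates are stationary after `c` steps.
-/

open Function Set

theorem Set.iterate_subset_iterate_natCard {σ : Type*} [Finite σ] {F : Set σ → Set σ}
    (hF : Monotone F) {s : Set σ} (hs : s ⊆ F s) (n : ℕ) : F^[n] s ⊆ F^[Nat.card σ] s := by
  have hmono : Monotone fun m => F^[m] s := hF.monotone_iterate_of_le_map hs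
  have hcard : Monotone fun m => (F^[m] s).ncard := fun _ _ h => ncard_le_ncard (hmono h)
  have eq_of_ncard_eq {m m' : ℕ} (h : m ≤ m') (hc : (F^[m'] s).ncard ≤ (F^[m] s).ncard) :
      F^[m] s = F^[m'] s :=
    eq_of_subset_of_ncard_le (hmono h) hc
  rcases le_total n (Nat.card σ) with hn | hn
  · exact hmono hn
  have hstab := Nat.stabilises_of_monotone hcard (fun m => ncard_le_card _) (fun m hm => by
    have h : F^[m + 1] s = F^[m] s := (eq_of_ncard_eq m.le_succ hm.ge).symm
    rwa [iterate_succ_apply' F (m + 1), h, ← iterate_succ_apply' F m]) hn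
  exact (eq_of_ncard_eq hn hstab.le).ge

namespace NFA

variable {α : Type*}

section reach

variable {σ : Type*} (M : NFA α σ)

def reachStep (S : Set σ) : Set σ := M.start ∪ ⋃ a, M.stepSet S a

theorem monotone_reachStep : Monotone M.reachStep := by
  intro S T hST
  exact union_subset_union_right _ (iUnion_mono fun a => biUnion_subset_biUnion_left hST)

theorem mem_reachStep_iterate_empty {n : ℕ} {t : σ} :
    t ∈ M.reachStep^[n] ∅ ↔ ∃ w : List α, w.length < n ∧ t ∈ M.eval w := by
  induction n generalizing t with
  | zero => simp
  | succ n ih =>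
    simp only [iterate_succ_apply', reachStep, mem_union, mem_iUnion, mem_stepSet, ih]
    constructor
    · rintro (ht | ⟨a, s, ⟨w, hw, hs⟩, ht⟩)
      · exact ⟨[], by simp, ht⟩
      · refine ⟨w ++ [a], by simpa using hw, ?_⟩
        rw [eval_append_singleton, mem_stepSet]
        exact ⟨s, hs, ht⟩
    · rintro ⟨w, hw, ht⟩
      rcases w.eq_nil_or_concat' with rfl | ⟨v, a, rfl⟩
      · exact Or.inl ht
      · rw [eval_append_singleton, mem_stepSet] at ht
        exact Or.inr ⟨a, ht.choose, ⟨v, by simpa using hw, ht.choose_spec.1⟩, ht.choose_spec.2⟩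

theorem exists_length_lt_card_of_mem_accepts [Fintype σ] {w : List α} (hw : w ∈ M.accepts) :
    ∃ v ∈ M.accepts, v.length < Fintype.card σ := by
  obtain ⟨t, ht_acc, ht⟩ := hw
  have hreach : t ∈ M.reachStep^[w.length + 1] ∅ :=
    M.mem_reachStep_iterate_empty.2 ⟨w, Nat.lt_succ_self _, ht⟩
  obtain ⟨v, hv, htv⟩ := M.mem_reachStep_iterate_empty.1 <|
    Set.iterate_subset_iterate_natCard M.monotone_reachStep (empty_subset _) _ hreach
  exact ⟨v, ⟨t, ht_acc, htv⟩, by simpa using hv⟩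

end reach

section inter

variable {σ₁ σ₂ : Type*} (M₁ : NFA α σ₁) (M₂ : NFA α σ₂)

def inter : NFA α (σ₁ × σ₂) where
  step p a := M₁.step p.1 a ×ˢ M₂.step p.2 a
  start := M₁.start ×ˢ M₂.start
  accept := M₁.accept ×ˢ M₂.accept

theorem stepSet_inter (S₁ : Set σ₁) (S₂ : Set σ₂) (a : α) :
    (M₁.inter M₂).stepSet (S₁ ×ˢ S₂) a = M₁.stepSet S₁ a ×ˢ M₂.stepSet S₂ a := by
  ext ⟨t₁, t₂⟩
  simp only [mem_stepSet, mem_prod, inter, Prod.exists]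
  constructor
  · rintro ⟨s₁, s₂, ⟨hs₁, hs₂⟩, ht₁, ht₂⟩
    exact ⟨⟨s₁, hs₁, ht₁⟩, ⟨s₂, hs₂, ht₂⟩⟩
  · rintro ⟨⟨s₁, hs₁, ht₁⟩, ⟨s₂, hs₂, ht₂⟩⟩
    exact ⟨s₁, s₂, ⟨hs₁, hs₂⟩, ht₁, ht₂⟩

theorem eval_inter (w : List α) : (M₁.inter M₂).eval w = M₁.eval w ×ˢ M₂.eval w := by
  induction w using List.reverseRecOn with
  | nil => rfl
  | append_singleton w a ih => simp only [eval_append_singleton, ih, stepSet_inter]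

theorem mem_accepts_inter {w : List α} :
    w ∈ (M₁.inter M₂).accepts ↔ w ∈ M₁.accepts ∧ w ∈ M₂.accepts := by
  constructor
  · rintro ⟨⟨t₁, t₂⟩, ⟨ht₁, ht₂⟩, hw⟩
    rw [eval_inter] at hw
    exact ⟨⟨t₁, ht₁, hw.1⟩, ⟨t₂, ht₂, hw.2⟩⟩
  · rintro ⟨⟨t₁, ht₁, hw₁⟩, ⟨t₂, ht₂, hw₂⟩⟩
    exact ⟨(t₁, t₂), ⟨ht₁, ht₂⟩, by rw [eval_inter]; exact ⟨hw₁, hw₂⟩⟩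

end inter

section pi

variable {ι : Type*} {σ : ι → Type*} (M : ∀ i, NFA α (σ i))

def pi : NFA α (∀ i, σ i) where
  step p a := univ.pi fun i => (M i).step (p i) a
  start := univ.pi fun i => (M i).start
  accept := univ.pi fun i => (M i).accept

theorem stepSet_pi (S : ∀ i, Set (σ i)) (a : α) :
    (pi M).stepSet (univ.pi S) a = univ.pi fun i => (M i).stepSet (S i) a := by
  ext t
  simp only [mem_stepSet, mem_univ_pi, pi]
  constructor
  · rintro ⟨s, hs, ht⟩ i
    exact ⟨s i, hs i, ht i⟩
  · intro ht
    choose s hs hst using ht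
    exact ⟨s, hs, hst⟩

theorem eval_pi (w : List α) : (pi M).eval w = univ.pi fun i => (M i).eval w := by
  induction w using List.reverseRecOn with
  | nil => rfl
  | append_singleton w a ih => simp only [eval_append_singleton, ih, stepSet_pi]

theorem mem_accepts_pi {w : List α} : w ∈ (pi M).accepts ↔ ∀ i, w ∈ (M i).accepts := by
  constructor
  · rintro ⟨t, ht, hw⟩ i
    rw [eval_pi] at hw
    exact ⟨t i, ht i (mem_univ i), hw i (mem_univ i)⟩
  · intro h
    choose t ht hw using h
    exact ⟨t, fun i _ => ht i, by rw [eval_pi]; exact fun i _ => hw i⟩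

end pi

def compl {σ : Type*} (M : NFA α σ) : NFA α (Set σ) := M.toDFAᶜ.toNFA

theorem accepts_compl {σ : Type*} (M : NFA α σ) : M.compl.accepts = M.acceptsᶜ := by
  rw [compl, DFA.toNFA_correct, DFA.accepts_compl, toDFA_correct]

end NFA

theorem stmt_10 {A : Type*} {k l : ℕ}
    (σ : Fin k → Type*) (τ : Fin l → Type*)
    [∀ i, Fintype (σ i)] [∀ j, Fintype (τ j)]
    (M : ∀ i, NFA A (σ i)) (N : ∀ j, NFA A (τ j))
    (h : ∃ w : List A, (∀ i, w ∈ (M i).accepts) ∧ ∀ j, w ∉ (N j).accepts) :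
    ∃ w : List A,
      ((∀ i, w ∈ (M i).accepts) ∧ ∀ j, w ∉ (N j).accepts) ∧
      w.length < (∏ i, Fintype.card (σ i)) * ∏ j, 2 ^ Fintype.card (τ j) := by
  let P := (NFA.pi M).inter (NFA.pi fun j => (N j).compl)
  have hP (w : List A) :
      w ∈ P.accepts ↔ (∀ i, w ∈ (M i).accepts) ∧ ∀ j, w ∉ (N j).accepts := by
    simp only [P, NFA.mem_accepts_inter, NFA.mem_accepts_pi, NFA.accepts_compl]
    rfl
  obtain ⟨w, hw⟩ := h
  obtain ⟨v, hv, hlen⟩ := P.exists_length_lt_card_of_mem_accepts ((hP w).2 hw)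
  refine ⟨v, (hP v).1 hv, ?_⟩
  simpa only [Fintype.card_prod, Fintype.card_pi, Fintype.card_set] using hlen
end

section
/- (Expressibility of the paper's complement operator by complement-free regular expressions.) For every regular expression R over a finite alphabet Σ, there exists a regular expression R' over Σ (built using only ∅, ε, letters, concatenation, union, and Kleene star) such that L(R') = L(R^*) \ L(R), which is the paper's semantics of the complement expression over-bar R; in particular, taking R with L(R^*) = Σ^*, the class of languages matched by regular expressions over Σ is closed under complementation relative to Σ^*. -/
/-!
Kleene's theorem in both directions. The left quotients of `L * M` are the sets
`L.leftQuotient x * M` joined with quotients of `M`, and those of `L∗` (by a nonempty word) are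
joins of quotients of `L` times `L∗`; so every regular expression has finitely many left
quotients and, by Myhill–Nerode, denotes a regular language. Regular languages are closed under
intersection and complement. Conversely, the words leading from `s` to `t` in a DFA with all
intermediate states in a finite set `P` are given by a regular expression, by induction on `P`
(McNaughton–Yamada), where the paths returning to a new state `q` are solved by Arden's lemma.
-/

open scoped Computability

namespace Language

variable {α : Type*}

theorem mem_sSup {S : Set (Language α)} {x : List α} : x ∈ sSup S ↔ ∃ l ∈ S, x ∈ l := Iff.rfl

theorem leftQuotient_mul (l m : Language α) (x : List α) :
    (l * m).leftQuotient x =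
      l.leftQuotient x * m + sSup (m.leftQuotient '' {v | ∃ u ∈ l, u ++ v = x}) := by
  ext y
  simp only [mem_leftQuotient, mem_add, mem_mul, mem_sSup, Set.mem_image, Set.mem_ofPred_eq]
  constructor
  · rintro ⟨u, hu, v, hv, huv⟩
    rcases List.append_eq_append_iff.1 huv with ⟨c, rfl, rfl⟩ | ⟨c, rfl, rfl⟩
    · exact .inr ⟨_, ⟨c, ⟨u, hu, rfl⟩, rfl⟩, by simpa using hv⟩
    · exact .inl ⟨c, by simpa using hu, v, hv, by simp⟩
  · rintro (⟨c, hc, v, hv, rfl⟩ | ⟨_, ⟨v, ⟨u, hu, rfl⟩, rfl⟩, hy⟩)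
    · exact ⟨_, hc, v, hv, by simp⟩
    · exact ⟨u, hu, _, hy, by simp⟩

theorem leftQuotient_kstar (l : Language α) {x : List α} (hx : x ≠ []) :
    (l∗).leftQuotient x = sSup (l.leftQuotient '' {v | ∃ u ∈ l∗, u ++ v = x}) * l∗ := by
  ext y
  simp only [mem_leftQuotient, mem_mul, mem_sSup, Set.mem_image, Set.mem_ofPred_eq]
  constructor
  · intro h
    obtain ⟨S, hS, hSl⟩ := mem_kstar_iff_exists_nonempty.1 h
    clear h
    induction S generalizing x with
    | nil => simp_all
    | cons c S ih =>
      have hSl' : S.flatten ∈ l∗ := join_mem_kstar fun z hz => (hSl z (by simp [hz])).1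
      have hc := (hSl c (by simp)).1
      rw [List.flatten_cons] at hS
      rcases List.append_eq_append_iff.1 hS with ⟨d, rfl, rfl⟩ | ⟨d, rfl, hd⟩
      · exact ⟨d, ⟨_, ⟨x, ⟨[], nil_mem_kstar l, rfl⟩, rfl⟩, by simpa using hc⟩, _, hSl', rfl⟩
      · rcases eq_or_ne d [] with rfl | hd'
        · refine ⟨[], ⟨_, ⟨_, ⟨[], nil_mem_kstar l, rfl⟩, rfl⟩, by simpa using hc⟩, _, hSl', ?_⟩
          simp [hd]
        · obtain ⟨p, ⟨_, ⟨v, ⟨u, hu, rfl⟩, rfl⟩, hp⟩, q, hq, rfl⟩ :=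
            ih hd' hd.symm fun z hz => hSl z (by simp [hz])
          refine ⟨p, ⟨_, ⟨v, ⟨c ++ u, ?_, by simp⟩, rfl⟩, hp⟩, q, hq, rfl⟩
          exact (mul_kstar_le_kstar : l * l∗ ≤ l∗) (append_mem_mul hc hu)
  · rintro ⟨p, ⟨_, ⟨v, ⟨u, hu, rfl⟩, rfl⟩, hp⟩, q, hq, rfl⟩
    have hvpq : v ++ (p ++ q) ∈ l∗ := by
      rw [← List.append_assoc]
      exact (mul_kstar_le_kstar : l * l∗ ≤ l∗) (append_mem_mul hp hq)
    simpa using kstar_mul_kstar l ▸ append_mem_mul hu hvpq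

theorem IsRegular.of_finite {l : Language α} (hl : (l : Set (List α)).Finite) :
    l.IsRegular := by
  rw [isRegular_iff_finite_range_leftQuotient]
  have hsuffixes : {y : List α | ∃ w ∈ l, y <:+ w}.Finite :=
    (hl.biUnion fun w _ => w.tails.finite_toSet).subset fun y ⟨w, hw, hyw⟩ =>
      Set.mem_biUnion hw ((List.mem_tails y w).2 hyw)
  refine hsuffixes.finite_subsets.subset ?_
  rintro _ ⟨x, rfl⟩ y hy
  exact ⟨x ++ y, hy, List.suffix_append x y⟩

theorem IsRegular.mul {l m : Language α} (hl : l.IsRegular) (hm : m.IsRegular) :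
    (l * m).IsRegular := by
  rw [isRegular_iff_finite_range_leftQuotient] at *
  refine (hl.image2 (fun k S => k * m + sSup S) hm.finite_subsets).subset ?_
  rintro _ ⟨x, rfl⟩
  exact ⟨_, ⟨x, rfl⟩, _, Set.image_subset_range _ _, (leftQuotient_mul l m x).symm⟩

theorem IsRegular.kstar {l : Language α} (hl : l.IsRegular) : (l∗).IsRegular := by
  rw [isRegular_iff_finite_range_leftQuotient] at *
  refine ((hl.finite_subsets.image fun S => sSup S * l∗).insert (l∗)).subset ?_
  rintro _ ⟨x, rfl⟩
  rcases eq_or_ne x [] with rfl | hx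
  · exact .inl rfl
  · exact .inr ⟨_, Set.image_subset_range _ _, (leftQuotient_kstar l hx).symm⟩

theorem kstar_sub_one (l : Language α) : (l - 1)∗ = l∗ := by
  ext x
  simp only [mem_kstar_iff_exists_nonempty, mem_sub, mem_one, ne_eq, and_assoc, and_self]

def IsRational (l : Language α) : Prop := ∃ R : RegularExpression α, R.matches' = l

theorem isRational_zero : (0 : Language α).IsRational := ⟨0, rfl⟩

theorem IsRational.add {l m : Language α} (hl : l.IsRational) (hm : m.IsRational) :
    (l + m).IsRational := by
  obtain ⟨P, rfl⟩ := hl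
  obtain ⟨Q, rfl⟩ := hm
  exact ⟨P + Q, rfl⟩

theorem IsRational.mul {l m : Language α} (hl : l.IsRational) (hm : m.IsRational) :
    (l * m).IsRational := by
  obtain ⟨P, rfl⟩ := hl
  obtain ⟨Q, rfl⟩ := hm
  exact ⟨P * Q, rfl⟩

theorem IsRational.kstar {l : Language α} (hl : l.IsRational) : (l∗).IsRational := by
  obtain ⟨P, rfl⟩ := hl
  exact ⟨P.star, rfl⟩

theorem isRational_singleton (x : List α) : ({x} : Language α).IsRational := by
  induction x with
  | nil => exact ⟨1, rfl⟩
  | cons a x ih =>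
    have hchar : ({[a]} : Language α).IsRational := ⟨.char a, rfl⟩
    have hcons : ({[a]} * {x} : Language α) = {a :: x} := Set.image2_singleton
    exact hcons ▸ hchar.mul ih

theorem IsRational.of_finite {l : Language α} (hl : (l : Set (List α)).Finite) :
    l.IsRational := by
  induction l, hl using Set.Finite.induction_on with
  | empty => exact isRational_zero
  | insert _ _ hs => exact (isRational_singleton _).add hs

theorem IsRational.iSup {ι : Type*} [Finite ι] {l : ι → Language α}
    (hl : ∀ i, (l i).IsRational) : (⨆ i, l i).IsRational := by
  have := Fintype.ofFinite ι
  rw [← Finset.sup_univ_eq_iSup]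
  exact Finset.sup_induction isRational_zero (fun _ h₁ _ h₂ => h₁.add h₂) fun i _ => hl i

end Language

theorem RegularExpression.isRegular_matches' {α : Type*} (R : RegularExpression α) :
    R.matches'.IsRegular := by
  induction R with
  | zero => exact .of_finite Set.finite_empty
  | epsilon => exact .of_finite (Set.finite_singleton [])
  | char a => exact .of_finite (Set.finite_singleton [a])
  | plus P Q hP hQ => exact hP.add hQ
  | comp P Q hP hQ => exact hP.mul hQ
  | star P hP => exact hP.kstar

namespace DFA

variable {α σ : Type*} (M : DFA α σ)

/-- Reading `x` from `s` leads to `t`, and every state visited strictly in between lies in `P`. -/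
def PathThrough (P : Set σ) : σ → List α → σ → Prop
  | s, [], t => s = t
  | s, a :: x, t => (x ≠ [] → M.step s a ∈ P) ∧ PathThrough P (M.step s a) x t

def pathsThrough (P : Set σ) (s t : σ) : Language α := {x | M.PathThrough P s x t}

variable {M}

theorem mem_pathsThrough {P : Set σ} {s t : σ} {x : List α} :
    x ∈ M.pathsThrough P s t ↔ M.PathThrough P s x t := Iff.rfl

theorem pathThrough_univ_iff {s t : σ} {x : List α} :
    M.PathThrough Set.univ s x t ↔ M.evalFrom s x = t := by
  induction x generalizing s with
  | nil => rfl
  | cons a x ih => simp [PathThrough, ih, evalFrom_cons]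

theorem PathThrough.mono {P Q : Set σ} (hPQ : P ⊆ Q) {s t : σ} {x : List α}
    (h : M.PathThrough P s x t) : M.PathThrough Q s x t := by
  induction x generalizing s with
  | nil => exact h
  | cons a x ih => exact ⟨fun hx => hPQ (h.1 hx), ih h.2⟩

theorem PathThrough.append {P : Set σ} {s q t : σ} (hq : q ∈ P) {x y : List α}
    (hx : M.PathThrough P s x q) (hy : M.PathThrough P q y t) :
    M.PathThrough P s (x ++ y) t := by
  induction x generalizing s with
  | nil => exact (show s = q from hx) ▸ hy
  | cons a x ih =>
    refine ⟨fun _ => ?_, ih hx.2⟩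
    rcases eq_or_ne x [] with rfl | hx'
    · exact (show M.step s a = q from hx.2) ▸ hq
    · exact hx.1 hx'

theorem finite_pathsThrough_empty [Finite α] (s t : σ) :
    (M.pathsThrough ∅ s t : Set (List α)).Finite := by
  refine ((Set.finite_range fun a : α => [a]).insert []).subset fun x hx => ?_
  match x, hx with
  | [], _ => exact .inl rfl
  | [a], _ => exact .inr ⟨a, rfl⟩
  | _ :: _ :: _, h => exact absurd (h.1 (List.cons_ne_nil _ _)) (Set.notMem_empty _)

theorem pathsThrough_insert_le (P : Set σ) (q s t : σ) :
    M.pathsThrough (insert q P) s t ≤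
      (M.pathsThrough P s q - 1) * M.pathsThrough (insert q P) q t + M.pathsThrough P s t := by
  intro x hx
  induction x generalizing s with
  | nil => exact .inr hx
  | cons a x ih =>
    obtain ⟨hmem, hx⟩ := hx
    rcases eq_or_ne x [] with rfl | hx'
    · exact .inr ⟨fun h => absurd rfl h, hx⟩
    rcases hmem hx' with hq | hP
    · exact .inl ⟨[a], ⟨⟨fun h => absurd rfl h, hq⟩, List.cons_ne_nil _ _⟩, x, hq ▸ hx, rfl⟩
    rcases ih _ hx with ⟨u, ⟨hu, -⟩, v, hv, rfl⟩ | hP'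
    · exact .inl ⟨a :: u, ⟨⟨fun _ => hP, hu⟩, List.cons_ne_nil _ _⟩, v, hv, rfl⟩
    · exact .inr ⟨fun _ => hP, hP'⟩

theorem mul_pathsThrough_insert_le (P : Set σ) (q s t : σ) :
    M.pathsThrough P s q * M.pathsThrough (insert q P) q t ≤ M.pathsThrough (insert q P) s t := by
  rintro _ ⟨u, hu, v, hv, rfl⟩
  exact (hu.mono (Set.subset_insert q P)).append (Set.mem_insert q P) hv

theorem pathsThrough_mono {P Q : Set σ} (hPQ : P ⊆ Q) (s t : σ) :
    M.pathsThrough P s t ≤ M.pathsThrough Q s t := fun _ h => h.mono hPQ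

theorem pathsThrough_insert_self (P : Set σ) (q t : σ) :
    M.pathsThrough (insert q P) q t = (M.pathsThrough P q q)∗ * M.pathsThrough P q t := by
  rw [← Language.kstar_sub_one, ← Language.self_eq_mul_add_iff (by simp [Language.mem_sub])]
  refine le_antisymm (pathsThrough_insert_le P q q t) (add_le_iff.2 ⟨?_, ?_⟩)
  · exact (mul_le_mul_left tsub_le_self _).trans (mul_pathsThrough_insert_le P q q t)
  · exact pathsThrough_mono (Set.subset_insert q P) q t

theorem pathsThrough_insert (P : Set σ) (q s t : σ) :
    M.pathsThrough (insert q P) s t = M.pathsThrough P s t +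
      M.pathsThrough P s q * ((M.pathsThrough P q q)∗ * M.pathsThrough P q t) := by
  rw [← pathsThrough_insert_self]
  refine le_antisymm ((pathsThrough_insert_le P q s t).trans ?_) ?_
  · rw [add_comm]
    gcongr
    exact tsub_le_self
  · exact add_le_iff.2
      ⟨pathsThrough_mono (Set.subset_insert q P) s t, mul_pathsThrough_insert_le P q s t⟩

theorem isRational_pathsThrough [Finite α] (P : Finset σ) (s t : σ) :
    (M.pathsThrough P s t).IsRational := by
  classical
  induction P using Finset.induction_on generalizing s t with
  | empty => exact .of_finite (by simpa using finite_pathsThrough_empty s t)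
  | insert q P _ ih =>
    rw [Finset.coe_insert, pathsThrough_insert]
    exact (ih s t).add ((ih s q).mul ((ih q q).kstar.mul (ih q t)))

theorem accepts_eq_iSup_pathsThrough_univ :
    M.accepts = ⨆ t : M.accept, M.pathsThrough Set.univ M.start t := by
  ext x
  simp [Language.mem_iSup, mem_pathsThrough, pathThrough_univ_iff, mem_accepts, eval]

end DFA

theorem Language.IsRegular.isRational {α : Type*} [Finite α] {l : Language α}
    (h : l.IsRegular) : l.IsRational := by
  obtain ⟨σ, _, M, rfl⟩ := h
  rw [M.accepts_eq_iSup_pathsThrough_univ]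
  exact .iSup fun t => by simpa using M.isRational_pathsThrough Finset.univ M.start t

theorem stmt_15 {A : Type} [Fintype A] :
    (∀ R : RegularExpression A,
      ∃ R' : RegularExpression A,
        (R'.matches' : Set (List A)) =
          (R.star.matches' : Set (List A)) \ R.matches') ∧
    (∀ R : RegularExpression A,
      (R.star.matches' : Set (List A)) = Set.univ →
      ∃ R' : RegularExpression A,
        (R'.matches' : Set (List A)) = Set.univ \ R.matches') := by
  have hdiff (R : RegularExpression A) : ∃ R' : RegularExpression A,
      (R'.matches' : Set (List A)) = (R.star.matches' : Set (List A)) \ R.matches' :=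
    (R.star.isRegular_matches'.inf R.isRegular_matches'.compl).isRational
  refine ⟨hdiff, fun R hR => ?_⟩
  obtain ⟨R', hR'⟩ := hdiff R
  exact ⟨R', hR ▸ hR'⟩
end
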